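/- Decomposition of the root-Hadamard transform into binary components: Let n ≥ 1, k ≥ 1, q = 2^k, f : F_2^n → Z_q with binary components a_0, ..., a_{k-1} : F_2^n → F_2 (so f(x) = Σ_{i=0}^{k-1} 2^i a_i(x) in Z_q). Let K be a finite index set, r : {0,...,n-1} → K, and for each s ∈ K let α_s = exp(2πi/k_s) be a root of unity; set λ(x) = Π_{j=0}^{n-1} α_{r(j)}^{x_j}. For c ∈ F_2^{k-1} let f_c(x) = c_0 a_0(x) ⊕ ... ⊕ c_{k-2} a_{k-2}(x) ⊕ a_{k-1}(x), and for d ∈ F_2^{k-1} let ι(d) = Σ_{j=0}^{k-2} d_j 2^j. Then for all u ∈ F_2^n: U_f(u) = 2^{-(k-1)} Σ_{(c,d) ∈ F_2^{k-1} × F_2^{k-1}} (-1)^{c·d} ζ_q^{ι(d)} T_{f_c}(u), where U_f(u) = 2^{-n/2} Σ_x ζ_q^{f(x)} (-1)^{u·x} λ(x) and T_g(u) = 2^{-n/2} Σ_x (-1)^{g(x)+u·x} λ(x) for Boolean g. -/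

import Mathlib

open Complex Finset

noncomputable section

/-- `ζ_q = exp(2πi/q)`. -/
def zetaC (q : ℕ) : ℂ := Complex.exp (2 * Real.pi * Complex.I / q)

/-- Hamming weight of a binary vector. -/
def wtv {n : ℕ} (x : Fin n → ZMod 2) : ℕ := ∑ j, (x j).val

/-- `(-1)^{u·x}` where `u·x` is the dot product over `F_2`. -/
def chr {n : ℕ} (u x : Fin n → ZMod 2) : ℂ := (-1 : ℂ) ^ (∑ j, u j * x j : ZMod 2).val

/-- `2^{-n/2}` as a complex number. -/
def nrm (n : ℕ) : ℂ := (((2 : ℝ) ^ (-(n : ℝ) / 2) : ℝ) : ℂ)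

/-- Component combination: `f_c(x) = c_0 a_0(x) ⊕ ... ⊕ c_{k-2} a_{k-2}(x) ⊕ a_{k-1}(x)`. -/
def comb {n k : ℕ} (hk : 1 ≤ k) (a : Fin k → (Fin n → ZMod 2) → ZMod 2)
    (c : Fin (k - 1) → ZMod 2) (x : Fin n → ZMod 2) : ZMod 2 :=
  (∑ i : Fin (k - 1), c i * a (Fin.castLE (Nat.sub_le k 1) i) x) + a ⟨k - 1, by omega⟩ x

/-- `ι(d) = Σ_{j=0}^{k-2} d_j 2^j` as a natural number. -/
def iotaN {k : ℕ} (d : Fin (k - 1) → ZMod 2) : ℕ := ∑ j : Fin (k - 1), (d j).val * 2 ^ (j : ℕ)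

/-- `λ(x) = Π_j α_{r(j)}^{x_j}`. -/
def lamb {n : ℕ} {K : Type*} (r : Fin n → K) (α : K → ℂ) (x : Fin n → ZMod 2) : ℂ :=
  ∏ j, α (r j) ^ (x j).val

/-- The root-Hadamard transform `U_f(u) = 2^{-n/2} Σ_x ζ_q^{f(x)} (-1)^{u·x} λ(x)`. -/
def rootH {n q : ℕ} {K : Type*} (r : Fin n → K) (α : K → ℂ)
    (f : (Fin n → ZMod 2) → ZMod q) (u : Fin n → ZMod 2) : ℂ :=
  nrm n * ∑ x, zetaC q ^ (f x).val * chr u x * lamb r α x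

/-- The root-Hadamard transform of a Boolean function,
`T_g(u) = 2^{-n/2} Σ_x (-1)^{g(x)+u·x} λ(x)`. -/
def rootHB {n : ℕ} {K : Type*} (r : Fin n → K) (α : K → ℂ)
    (g : (Fin n → ZMod 2) → ZMod 2) (u : Fin n → ZMod 2) : ℂ :=
  nrm n * ∑ x, (-1 : ℂ) ^ ((g x).val + (∑ j, u j * x j : ZMod 2).val) * lamb r α x

lemma zetaC_pow_self (q : ℕ) (hq : q ≠ 0) : zetaC q ^ q = 1 := by
  rw [zetaC, ← Complex.exp_nat_mul]
  rw [show (q:ℂ) * (2 * Real.pi * Complex.I / q) = 2 * Real.pi * Complex.I by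
    have : (q:ℂ) ≠ 0 := Nat.cast_ne_zero.mpr hq
    field_simp]
  exact Complex.exp_two_pi_mul_I

lemma zetaC_pow_mod (q m : ℕ) (hq : q ≠ 0) : zetaC q ^ m = zetaC q ^ (m % q) := by
  conv_lhs => rw [← Nat.mod_add_div m q]
  rw [pow_add, pow_mul, zetaC_pow_self q hq, one_pow, mul_one]

lemma zetaC_pow_val (q : ℕ) [NeZero q] (m : ℕ) :
    zetaC q ^ ((m : ZMod q)).val = zetaC q ^ m := by
  rw [ZMod.val_natCast, ← zetaC_pow_mod q m (NeZero.ne q)]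

lemma zetaC_pow_half (k : ℕ) (hk : 1 ≤ k) : zetaC (2 ^ k) ^ (2 ^ (k - 1)) = -1 := by
  rw [zetaC, ← Complex.exp_nat_mul]
  rw [show ((2 ^ (k-1) : ℕ) : ℂ) * (2 * Real.pi * Complex.I / ((2^k : ℕ):ℂ)) = Real.pi * Complex.I by
    have h : (k - 1) + 1 = k := by omega
    have h2 : ((2:ℂ)^(k-1)) ≠ 0 := pow_ne_zero _ two_ne_zero
    push_cast
    rw [← h, pow_succ]
    field_simp
    ring_nf
    rw [Nat.add_sub_cancel_left]]
  exact Complex.exp_pi_mul_I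

lemma neg_one_pow_mod2 (m : ℕ) : (-1:ℂ) ^ (m % 2) = (-1:ℂ) ^ m := by
  conv_rhs => rw [← Nat.div_add_mod m 2]
  rw [pow_add, pow_mul, neg_one_sq, one_pow, one_mul]

lemma neg_one_val_add (s t : ZMod 2) :
    (-1:ℂ) ^ ((s + t).val) = (-1:ℂ) ^ s.val * (-1:ℂ) ^ t.val := by
  rw [ZMod.val_add, neg_one_pow_mod2, pow_add]

lemma neg_one_val_sum {ι : Type*} (s : Finset ι) (g : ι → ZMod 2) :
    (-1:ℂ) ^ ((∑ i ∈ s, g i).val) = ∏ i ∈ s, (-1:ℂ) ^ ((g i).val) := by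
  induction s using Finset.cons_induction with
  | empty => simp
  | cons a s ha ih => rw [Finset.sum_cons, Finset.prod_cons, neg_one_val_add, ih]

lemma univ_zmod_two : (Finset.univ : Finset (ZMod 2)) = {0, 1} := by decide

lemma orth {m : ℕ} (e : Fin m → ZMod 2) :
    ∑ c : Fin m → ZMod 2, (-1:ℂ) ^ ((∑ i, c i * e i).val)
      = if e = 0 then (2:ℂ)^m else 0 := by
  have : ∑ c : Fin m → ZMod 2, (-1:ℂ) ^ ((∑ i, c i * e i).val)
      = ∑ c : Fin m → ZMod 2, ∏ i, (-1:ℂ)^(((c i) * e i).val) := by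
    simp [neg_one_val_sum]
  rw [this, ← Fintype.prod_sum (fun i (v : ZMod 2) => (-1:ℂ)^((v * e i).val))]
  have hsum : ∀ w : ZMod 2, ∑ v : ZMod 2, (-1:ℂ)^((v * w).val)
      = if w = 0 then 2 else 0 := by
    intro w
    rw [univ_zmod_two, Finset.sum_insert (by decide), Finset.sum_singleton]
    rcases (by decide : ∀ w : ZMod 2, w = 0 ∨ w = 1) w with h | h <;> subst h <;>
      norm_num [ZMod.val_one]
  by_cases he : e = 0
  · rw [if_pos he]
    calc ∏ i : Fin m, ∑ v : ZMod 2, (-1:ℂ)^((v * e i).val)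
        = ∏ _i : Fin m, (2:ℂ) := by
          apply Finset.prod_congr rfl; intro i _; rw [hsum, if_pos]; rw [he]; rfl
      _ = (2:ℂ)^m := by simp
  · obtain ⟨i, hi⟩ : ∃ i, e i ≠ 0 := by
      by_contra h; push_neg at h; exact he (funext h)
    rw [if_neg he]
    exact Finset.prod_eq_zero (Finset.mem_univ i) (by rw [hsum, if_neg hi])

lemma key {n k : ℕ} (hk : 1 ≤ k) (a : Fin k → (Fin n → ZMod 2) → ZMod 2) (x : Fin n → ZMod 2) :
    ∑ c : Fin (k-1) → ZMod 2, ∑ d : Fin (k-1) → ZMod 2,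
        chr c d * zetaC (2^k) ^ iotaN d * (-1:ℂ)^((comb hk a c x).val)
      = (2:ℂ)^(k-1) *
        zetaC (2^k) ^ ((∑ i : Fin k, (2^(i:ℕ) : ZMod (2^k)) * ((a i x).val : ZMod (2^k))).val) := by
  haveI : NeZero (2^k) := ⟨pow_ne_zero _ two_ne_zero⟩
  set b' : Fin (k-1) → ZMod 2 := fun j => a (Fin.castLE (Nat.sub_le k 1) j) x with hb'
  set v : ZMod 2 := a ⟨k - 1, by omega⟩ x with hv
  -- compute the LHS
  rw [Finset.sum_comm]
  have hcomb : ∀ c, comb hk a c x = (∑ i, c i * b' i) + v := by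
    intro c; rfl
  have hinner : ∀ d : Fin (k-1) → ZMod 2,
      (∑ c : Fin (k-1) → ZMod 2, chr c d * zetaC (2^k) ^ iotaN d * (-1:ℂ)^((comb hk a c x).val))
      = (if d = b' then zetaC (2^k) ^ iotaN d * (-1:ℂ)^(v.val) * 2^(k-1) else 0) := by
    intro d
    have hterm : ∀ c : Fin (k-1) → ZMod 2,
        chr c d * zetaC (2^k) ^ iotaN d * (-1:ℂ)^((comb hk a c x).val)
        = zetaC (2^k) ^ iotaN d * (-1:ℂ)^(v.val) * (-1:ℂ)^((∑ i, c i * (d i + b' i)).val) := by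
      intro c
      rw [hcomb, chr, neg_one_val_add]
      have h2 : (∑ i, c i * (d i + b' i)) = (∑ j, c j * d j) + (∑ i, c i * b' i) := by
        rw [← Finset.sum_add_distrib]; apply Finset.sum_congr rfl; intro i _; ring
      rw [h2, neg_one_val_add]
      ring
    rw [Finset.sum_congr rfl (fun c _ => hterm c), ← Finset.mul_sum,
      orth (fun i => d i + b' i)]
    have hcond : ((fun i => d i + b' i) = 0) = (d = b') := by
      simp only [funext_iff, Pi.zero_apply,
        (by decide : ∀ a b : ZMod 2, a + b = 0 ↔ a = b)]
    simp only [hcond, mul_ite, mul_zero]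
  rw [Finset.sum_congr rfl (fun d _ => hinner d), Finset.sum_ite_eq' Finset.univ b'
    (fun d => zetaC (2^k) ^ iotaN d * (-1:ℂ)^(v.val) * 2^(k-1)), if_pos (Finset.mem_univ b')]
  -- compute the RHS
  have hN : (∑ i : Fin k, 2^(i:ℕ) * (a i x).val) = iotaN b' + 2^(k-1) * v.val := by
    obtain ⟨m, rfl⟩ : ∃ m, k = m + 1 := ⟨k-1, by omega⟩
    rw [show (∑ i : Fin (m+1), 2^(i:ℕ) * (a i x).val)
        = ∑ i : Fin (m+1), (fun i : Fin (m+1) => 2^(i:ℕ) * (a i x).val) i from rfl,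
      Fin.sum_univ_castSucc]
    congr 1
    rw [iotaN]
    apply Finset.sum_congr rfl
    intro j _
    rw [mul_comm]
    rfl
  have hcast : (∑ i : Fin k, (2^(i:ℕ) : ZMod (2^k)) * ((a i x).val : ZMod (2^k)))
      = ((∑ i : Fin k, 2^(i:ℕ) * (a i x).val : ℕ) : ZMod (2^k)) := by
    push_cast; rfl
  rw [hcast, zetaC_pow_val, hN, pow_add, pow_mul, zetaC_pow_half k hk]
  ring

/-- decomposition of the root-Hadamard transform into binary components. -/
theorem rootH_decomposition {n k : ℕ} (hn : 1 ≤ n) (hk : 1 ≤ k)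
    {K : Type*} (r : Fin n → K) (ks : K → ℕ) (hks : ∀ s, 1 ≤ ks s)
    (f : (Fin n → ZMod 2) → ZMod (2 ^ k))
    (a : Fin k → (Fin n → ZMod 2) → ZMod 2)
    (hf : ∀ x, f x = ∑ i : Fin k, (2 ^ (i : ℕ) : ZMod (2 ^ k)) * ((a i x).val : ZMod (2 ^ k)))
    (u : Fin n → ZMod 2) :
    rootH r (fun s => zetaC (ks s)) f u =
      ((2 : ℂ) ^ (k - 1))⁻¹ *
        ∑ c : Fin (k - 1) → ZMod 2, ∑ d : Fin (k - 1) → ZMod 2,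
          chr c d * zetaC (2 ^ k) ^ iotaN d *
            rootHB r (fun s => zetaC (ks s)) (comb hk a c) u := by
  classical
  have h2 : ((2:ℂ)^(k-1)) ≠ 0 := pow_ne_zero _ two_ne_zero
  set α := fun s => zetaC (ks s) with hα
  set L := lamb r α with hL
  set ζ := zetaC (2^k) with hζ
  have hRB : ∀ c : Fin (k-1) → ZMod 2, rootHB r α (comb hk a c) u
      = nrm n * ∑ x, (-1:ℂ)^((comb hk a c x).val) * (chr u x * L x) := by
    intro c
    rw [rootHB]
    congr 1
    apply Finset.sum_congr rfl
    intro x _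
    rw [pow_add, chr, mul_assoc]
  calc rootH r α f u
      = nrm n * ∑ x, ζ ^ (f x).val * chr u x * L x := by rw [rootH]
    _ = ∑ x, ((2:ℂ)^(k-1))⁻¹ * (ζ ^ (f x).val * (2:ℂ)^(k-1)) * (nrm n * (chr u x * L x)) := by
        rw [Finset.mul_sum]
        apply Finset.sum_congr rfl
        intro x _
        field_simp
    _ = ((2:ℂ)^(k-1))⁻¹ * ∑ x, (∑ c, ∑ d, chr c d * ζ ^ iotaN d *
          (-1:ℂ)^((comb hk a c x).val)) * (nrm n * (chr u x * L x)) := by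
        rw [Finset.mul_sum]
        apply Finset.sum_congr rfl
        intro x _
        rw [hf x]
        rw [show ζ ^ ((∑ i : Fin k, (2^(i:ℕ) : ZMod (2^k)) * ((a i x).val : ZMod (2^k))).val)
            * (2:ℂ)^(k-1) = ∑ c, ∑ d, chr c d * ζ ^ iotaN d *
              (-1:ℂ)^((comb hk a c x).val) by rw [key hk a x]; ring]
        ring
    _ = ((2:ℂ)^(k-1))⁻¹ * ∑ c, ∑ d, chr c d * ζ ^ iotaN d * rootHB r α (comb hk a c) u := by
        congr 1
        simp only [hRB, Finset.mul_sum, Finset.sum_mul]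
        rw [Finset.sum_comm]
        apply Finset.sum_congr rfl; intro c _
        rw [Finset.sum_comm]
        apply Finset.sum_congr rfl; intro d _
        apply Finset.sum_congr rfl; intro x _
        ring


end
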